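/- For any quaternionic spinor κ, the 2×2 quaternionic matrix with first column κ and second column −κ̌/|κ|² is a Clifford matrix (its columns are quaternionic spinors and its pseudo-determinant is 1). -/

import Mathlib

/-!
The complementary pair `κ̌` of a spinor is again a spinor, and since `q* q' = |q|²` the bracket
`{κ, κ̌} = ξ* (-ξ') - η* η'` equals `-|κ|²`. As the pseudo-determinant of a matrix is the bracket
of its columns and the bracket is real-linear in its second argument, rescaling `κ̌` by `-1/|κ|²`
gives pseudo-determinant `1`.
-/

open Quaternion

noncomputable section

/-- The involution `q* = a + bi + cj - dk` on quaternions (Clifford reversion). -/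
def qstar (q : ℍ[ℝ]) : ℍ[ℝ] := ⟨q.re, q.imI, q.imJ, -q.imK⟩

/-- The involution `q' = a - bi - cj + dk` on quaternions. -/
def qprime (q : ℍ[ℝ]) : ℍ[ℝ] := ⟨q.re, -q.imI, -q.imJ, q.imK⟩

/-- A paravector is an element of `ℝ + ℝi + ℝj`, i.e. a quaternion with zero `k`-component. -/
def IsParavector (q : ℍ[ℝ]) : Prop := q.imK = 0

/-- The quaternion `k`. -/
def qk : ℍ[ℝ] := ⟨0, 0, 0, 1⟩

/-- A quaternionic spinor: a pair `(ξ, η) ≠ (0,0)` with `ξ * conj η` a paravector. -/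
def IsSpinor (κ : ℍ[ℝ] × ℍ[ℝ]) : Prop := κ ≠ 0 ∧ IsParavector (κ.1 * star κ.2)

/-- The bracket `{κ₁, κ₂} = ξ₁* η₂ − η₁* ξ₂`. -/
def bracket (κ₁ κ₂ : ℍ[ℝ] × ℍ[ℝ]) : ℍ[ℝ] := qstar κ₁.1 * κ₂.2 - qstar κ₁.2 * κ₂.1

/-- Right multiplication `κ x = (ξ x, η x)`. -/
def rmul (κ : ℍ[ℝ] × ℍ[ℝ]) (x : ℍ[ℝ]) : ℍ[ℝ] × ℍ[ℝ] := (κ.1 * x, κ.2 * x)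

/-- The complementary pair `κ̌ = (η', −ξ')`. -/
def qcheck (κ : ℍ[ℝ] × ℍ[ℝ]) : ℍ[ℝ] × ℍ[ℝ] := (qprime κ.2, -qprime κ.1)

/-- The real inner product on `ℍ²`: `⟨κ₁, κ₂⟩ = Re (ξ₁ ξ̄₂ + η₁ η̄₂)`. -/
def qinner (κ₁ κ₂ : ℍ[ℝ] × ℍ[ℝ]) : ℝ := (κ₁.1 * star κ₂.1 + κ₁.2 * star κ₂.2).re

/-- The squared norm `|κ|² = |ξ|² + |η|²` on `ℍ²`. -/
def qnsq (κ : ℍ[ℝ] × ℍ[ℝ]) : ℝ := Quaternion.normSq κ.1 + Quaternion.normSq κ.2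

/-- The pseudo-determinant of a 2×2 quaternionic matrix: `pdet [[a,b],[c,d]] = a* d − c* b`. -/
def pdet (A : Matrix (Fin 2) (Fin 2) ℍ[ℝ]) : ℍ[ℝ] := qstar (A 0 0) * A 1 1 - qstar (A 1 0) * A 0 1

/-- A Clifford matrix: columns are quaternionic spinors and the pseudo-determinant is 1. -/
def IsClifford (A : Matrix (Fin 2) (Fin 2) ℍ[ℝ]) : Prop :=
  IsSpinor (A 0 0, A 1 0) ∧ IsSpinor (A 0 1, A 1 1) ∧ pdet A = 1

/-- Matrix-vector action of a 2×2 quaternionic matrix on a column vector in `ℍ²`. -/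
def mact (A : Matrix (Fin 2) (Fin 2) ℍ[ℝ]) (κ : ℍ[ℝ] × ℍ[ℝ]) : ℍ[ℝ] × ℍ[ℝ] :=
  (A 0 0 * κ.1 + A 0 1 * κ.2, A 1 0 * κ.1 + A 1 1 * κ.2)

@[simp] lemma qprime_re (q : ℍ[ℝ]) : (qprime q).re = q.re := rfl
@[simp] lemma qprime_imI (q : ℍ[ℝ]) : (qprime q).imI = -q.imI := rfl
@[simp] lemma qprime_imJ (q : ℍ[ℝ]) : (qprime q).imJ = -q.imJ := rfl
@[simp] lemma qprime_imK (q : ℍ[ℝ]) : (qprime q).imK = q.imK := rfl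
@[simp] lemma qstar_re (q : ℍ[ℝ]) : (qstar q).re = q.re := rfl
@[simp] lemma qstar_imI (q : ℍ[ℝ]) : (qstar q).imI = q.imI := rfl
@[simp] lemma qstar_imJ (q : ℍ[ℝ]) : (qstar q).imJ = q.imJ := rfl
@[simp] lemma qstar_imK (q : ℍ[ℝ]) : (qstar q).imK = -q.imK := rfl

lemma qprime_eq_zero {q : ℍ[ℝ]} : qprime q = 0 ↔ q = 0 := by
  simp [Quaternion.ext_iff]

lemma qstar_mul_qprime (q : ℍ[ℝ]) : qstar q * qprime q = ((normSq q : ℝ) : ℍ[ℝ]) := by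
  ext <;> simp only [normSq_def', re_mul, imI_mul, imJ_mul, imK_mul, re_coe, imI_coe, imJ_coe,
    imK_coe, qstar_re, qstar_imI, qstar_imJ, qstar_imK, qprime_re, qprime_imI, qprime_imJ,
    qprime_imK] <;> ring

lemma imK_qprime_mul_star_qprime (a b : ℍ[ℝ]) :
    (qprime b * star (qprime a)).imK = -(a * star b).imK := by
  simp only [imK_mul, re_star, imI_star, imJ_star, imK_star, qprime_re, qprime_imI, qprime_imJ,
    qprime_imK]
  ring

lemma qnsq_eq_zero {κ : ℍ[ℝ] × ℍ[ℝ]} : qnsq κ = 0 ↔ κ = 0 := by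
  rw [qnsq, add_eq_zero_iff_of_nonneg normSq_nonneg normSq_nonneg, normSq_eq_zero,
    normSq_eq_zero, Prod.ext_iff, Prod.fst_zero, Prod.snd_zero]

lemma qcheck_eq_zero {κ : ℍ[ℝ] × ℍ[ℝ]} : qcheck κ = 0 ↔ κ = 0 := by
  simp only [qcheck, Prod.ext_iff, Prod.fst_zero, Prod.snd_zero, neg_eq_zero, qprime_eq_zero]
  exact and_comm

namespace IsSpinor

variable {κ : ℍ[ℝ] × ℍ[ℝ]}

lemma qcheck (hκ : IsSpinor κ) : IsSpinor (qcheck κ) := by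
  refine ⟨qcheck_eq_zero.not.mpr hκ.1, ?_⟩
  have hpar : (κ.1 * star κ.2).imK = 0 := hκ.2
  change (qprime κ.2 * star (-qprime κ.1)).imK = 0
  rw [star_neg, mul_neg, imK_neg, imK_qprime_mul_star_qprime, hpar, neg_zero, neg_zero]

lemma smul (hκ : IsSpinor κ) {r : ℝ} (hr : r ≠ 0) : IsSpinor (r • κ) := by
  refine ⟨smul_ne_zero hr hκ.1, ?_⟩
  have hpar : (κ.1 * star κ.2).imK = 0 := hκ.2
  change (r • κ.1 * star (r • κ.2)).imK = 0
  rw [Quaternion.star_smul, smul_mul_smul_comm, imK_smul, hpar, smul_zero]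

lemma neg (hκ : IsSpinor κ) : IsSpinor (-κ) := by
  refine ⟨neg_ne_zero.mpr hκ.1, ?_⟩
  change (-κ.1 * star (-κ.2)).imK = 0
  rw [star_neg, neg_mul_neg]
  exact hκ.2

end IsSpinor

section bracket

variable (κ₁ κ₂ : ℍ[ℝ] × ℍ[ℝ])

lemma isClifford_cols_iff :
    IsClifford !![κ₁.1, κ₂.1; κ₁.2, κ₂.2] ↔
      IsSpinor κ₁ ∧ IsSpinor κ₂ ∧ bracket κ₁ κ₂ = 1 :=
  Iff.rfl

lemma bracket_neg_right : bracket κ₁ (-κ₂) = -bracket κ₁ κ₂ := by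
  simp only [bracket, Prod.fst_neg, Prod.snd_neg, mul_neg, neg_sub, sub_neg_eq_add,
    neg_add_eq_sub]

lemma bracket_smul_right (r : ℝ) : bracket κ₁ (r • κ₂) = r • bracket κ₁ κ₂ := by
  simp only [bracket, Prod.smul_fst, Prod.smul_snd, mul_smul_comm, smul_sub]

lemma bracket_qcheck_right : bracket κ₁ (qcheck κ₁) = -(qnsq κ₁ : ℍ[ℝ]) := by
  simp only [bracket, qcheck, mul_neg, qstar_mul_qprime, qnsq, coe_add]
  abel

end bracket

/-- For any quaternionic spinor `κ`, the matrix with columns `κ` and `−κ̌/|κ|²` is a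
Clifford matrix. -/
theorem clifford_with_arbitrary_column (κ : ℍ[ℝ] × ℍ[ℝ]) (hκ : IsSpinor κ) :
    IsClifford !![κ.1, -((qnsq κ)⁻¹ • (qcheck κ).1);
                  κ.2, -((qnsq κ)⁻¹ • (qcheck κ).2)] := by
  have hn : qnsq κ ≠ 0 := qnsq_eq_zero.not.mpr hκ.1
  refine (isClifford_cols_iff κ (-((qnsq κ)⁻¹ • qcheck κ))).mpr
    ⟨hκ, (hκ.qcheck.smul (inv_ne_zero hn)).neg, ?_⟩
  rw [bracket_neg_right, bracket_smul_right, bracket_qcheck_right, smul_neg, neg_neg,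
    ← coe_smul, smul_eq_mul, inv_mul_cancel₀ hn, coe_one]
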